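/- Let G be a graph in which the copies of K₃ form a single K₃-component (the edge-intersection graph of triangles is connected and covers all edges), and suppose u, w, v are vertices with uw, vw ∈ E(G) and uv ∉ E(G). Then G contains a subgraph J such that either J has 6 vertices and 9 edges, or J together with the extra edge uv is isomorphic to K₄ or to W₅ (the graph obtained from C₄ by adding a universal vertex). -/

import Mathlib

def IsTriangle {V : Type*} [DecidableEq V] (G : SimpleGraph V) (t : Finset V) : Prop :=
  t.card = 3 ∧ ∀ a ∈ t, ∀ b ∈ t, a ≠ b → G.Adj a b

/-- Two triangles of `G` are adjacent in the edge-intersection graph iff they share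
an edge, i.e. at least two vertices. -/
def TriAdj {V : Type*} [DecidableEq V] (G : SimpleGraph V) (t₁ t₂ : Finset V) : Prop :=
  IsTriangle G t₁ ∧ IsTriangle G t₂ ∧ 2 ≤ (t₁ ∩ t₂).card

/-- The 5-vertex wheel `W₅`: a 4-cycle on `{0,1,2,3}` plus the universal vertex `4`. -/
def W5 : SimpleGraph (Fin 5) :=
  SimpleGraph.fromRel (fun a b => (a.1 < 4 ∧ b.1 = (a.1 + 1) % 4) ∨ b = 4)

/-!
Take triangles `uwx ∋ uw` and `vwy ∋ vw`. If `vx`, `uy` or `xy` is an edge, the vertices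
`u, v, w, x, y` already carry `K₄ - uv` or `W₅ - uv`. Otherwise follow a chain of edge-sharing
triangles from `uwx` to `vwy` and glue them on one at a time: a triangle glued along an edge adds
at most one vertex, and if it adds one it also adds two edges, so `2|V| ≤ |E| + 3` is preserved.
Stopping as soon as six vertices are reached gives six vertices and at least nine edges. If that
never happens, the union has at most five vertices, hence exactly `u, v, w, x, y`; but these span
only the six edges of the two triangles, contradicting `2 · 5 ≤ |E| + 3`.
-/

open SimpleGraph

theorem IsTriangle.exists_eq_insert_third {V : Type*} [DecidableEq V] {G : SimpleGraph V}
    {t : Finset V} (ht : IsTriangle G t) {p q : V} (hp : p ∈ t) (hq : q ∈ t) (hpq : p ≠ q) :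
    ∃ c, G.Adj p c ∧ G.Adj q c ∧ t = {p, q, c} := by
  obtain ⟨c, hct, hc⟩ := Finset.exists_mem_notMem_of_card_lt_card (s := {p, q}) (t := t)
    (by rw [ht.1, Finset.card_pair hpq]; norm_num)
  simp only [Finset.mem_insert, Finset.mem_singleton, not_or] at hc
  refine ⟨c, ht.2 p hp c hct (Ne.symm hc.1), ht.2 q hq c hct (Ne.symm hc.2),
    (Finset.eq_of_subset_of_card_le ?_ ?_).symm⟩
  · simp [Finset.insert_subset_iff, hp, hq, hct]
  · rw [ht.1, Finset.card_eq_three.mpr ⟨p, q, c, hpq, Ne.symm hc.1, Ne.symm hc.2, rfl⟩]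

namespace SimpleGraph.Subgraph

variable {V : Type*}

theorem edgeSet_induce_range_union_eq {W : Type*} (G : SimpleGraph V)
    (H : SimpleGraph W) (f : W → V) {u v : V} (huv : u ≠ v) (hu : u ∈ Set.range f)
    (hv : v ∈ Set.range f) (hH : (G ⊔ edge u v).comap f = H) :
    ((⊤ : G.Subgraph).induce (Set.range f)).edgeSet ∪ {s(u, v)} = Sym2.map f '' H.edgeSet := by
  subst hH
  obtain ⟨i, rfl⟩ := hu
  obtain ⟨j, rfl⟩ := hv
  ext e
  induction e using Sym2.ind with
  | _ a b =>
    simp only [Set.mem_union, Subgraph.mem_edgeSet, Subgraph.induce_adj, Subgraph.top_adj,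
      Set.mem_singleton_iff, Sym2.eq_iff, Set.mem_image, Sym2.exists, mem_edgeSet,
      Sym2.map_mk, Set.mem_range]
    constructor
    · rintro (⟨⟨x, rfl⟩, ⟨y, rfl⟩, h⟩ | ⟨rfl, rfl⟩ | ⟨rfl, rfl⟩)
      · exact ⟨x, y, Or.inl h, Or.inl ⟨rfl, rfl⟩⟩
      · exact ⟨i, j, Or.inr (by simp [edge_adj, huv]), Or.inl ⟨rfl, rfl⟩⟩
      · exact ⟨i, j, Or.inr (by simp [edge_adj, huv]), Or.inr ⟨rfl, rfl⟩⟩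
    · rintro ⟨x, y, h | h, ⟨rfl, rfl⟩ | ⟨rfl, rfl⟩⟩
      · exact Or.inl ⟨⟨x, rfl⟩, ⟨y, rfl⟩, h⟩
      · exact Or.inl ⟨⟨y, rfl⟩, ⟨x, rfl⟩, h.symm⟩
      all_goals rw [edge_adj] at h; tauto

variable {G : SimpleGraph V}

theorem exists_verts_eq_and_ncard_edgeSet_eq (H : G.Subgraph) {k : ℕ}
    (hk : k ≤ H.edgeSet.ncard) : ∃ J : G.Subgraph, J.verts = H.verts ∧ J.edgeSet.ncard = k := by
  obtain ⟨S, hS, rfl⟩ := Set.exists_subset_card_eq hk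
  refine ⟨H.deleteEdges (H.edgeSet \ S), rfl, congrArg Set.ncard ?_⟩
  ext e
  induction e using Sym2.ind with
  | _ a b =>
    simp only [Subgraph.mem_edgeSet, deleteEdges_adj, Set.mem_sdiff, not_and, not_not]
    exact ⟨fun h => h.2 h.1, fun h => ⟨hS h, fun _ => h⟩⟩

theorem ncard_edgeSet_le_six_of_verts_subset [DecidableEq V] (H : G.Subgraph) {u v w x y : V}
    (hV : H.verts ⊆ {u, v, w, x, y}) (huv : ¬G.Adj u v) (huy : ¬G.Adj u y)
    (hvx : ¬G.Adj v x) (hxy : ¬G.Adj x y) : H.edgeSet.ncard ≤ 6 := by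
  set F : Finset (Sym2 V) := {s(u, w), s(u, x), s(w, x), s(v, w), s(v, y), s(w, y)}
  have hsub : H.edgeSet ⊆ F := by
    intro e he
    induction e using Sym2.ind with
    | _ a b =>
      have hab := H.adj_sub he
      have ha := hV (H.edge_vert he)
      have hb := hV (H.edge_vert he.symm)
      simp only [Set.mem_insert_iff, Set.mem_singleton_iff] at ha hb
      rcases ha with rfl | rfl | rfl | rfl | rfl <;> rcases hb with rfl | rfl | rfl | rfl | rfl <;>
        simp_all [F, Sym2.eq_swap, hab.symm]
  calc H.edgeSet.ncard ≤ (F : Set (Sym2 V)).ncard := Set.ncard_le_ncard hsub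
    _ = F.card := Set.ncard_coe_finset F
    _ ≤ 6 := Finset.card_le_six

section Triangles

variable [DecidableEq V]

theorem ncard_sup_induce_triangle [Finite V] (H : G.Subgraph)
    {t : Finset V} (ht : IsTriangle G t) {p q : V} (hp : p ∈ t) (hq : q ∈ t) (hpq : p ≠ q)
    (hpH : p ∈ H.verts) (hqH : q ∈ H.verts) :
    (H ⊔ (⊤ : G.Subgraph).induce t).verts.ncard ≤ H.verts.ncard + 1 ∧
      2 * (H ⊔ (⊤ : G.Subgraph).induce t).verts.ncard + H.edgeSet.ncard ≤
        2 * H.verts.ncard + (H ⊔ (⊤ : G.Subgraph).induce t).edgeSet.ncard := by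
  set H' := H ⊔ (⊤ : G.Subgraph).induce t
  obtain ⟨c, hpc, hqc, rfl⟩ := ht.exists_eq_insert_third hp hq hpq
  have hverts : H'.verts = insert c H.verts := by
    ext z
    simp only [H', verts_sup, induce_verts, Finset.coe_insert, Finset.coe_singleton,
      Set.mem_union, Set.mem_insert_iff, Set.mem_singleton_iff]
    constructor
    · rintro (hz | rfl | rfl | rfl) <;> simp_all
    · rintro (rfl | hz) <;> simp_all
  have hmono : H.edgeSet ⊆ H'.edgeSet := edgeSet_mono le_sup_left
  by_cases hc : c ∈ H.verts
  · rw [hverts, Set.insert_eq_of_mem hc]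
    have := Set.ncard_le_ncard hmono
    omega
  · have hnew : ∀ r ∈ ({p, q} : Set V), G.Adj r c →
        s(r, c) ∈ H'.edgeSet ∧ s(r, c) ∉ H.edgeSet := fun r hr hrc =>
      ⟨Or.inr ⟨by rcases hr with rfl | rfl <;> simp, by simp, hrc⟩,
        fun h => hc (H.mem_verts_of_mem_edge h (Sym2.mem_mk_right r c))⟩
    obtain ⟨hpcH', hpcH⟩ := hnew p (by simp) hpc
    obtain ⟨hqcH', hqcH⟩ := hnew q (by simp) hqc
    have hsub : insert s(p, c) (insert s(q, c) H.edgeSet) ⊆ H'.edgeSet :=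
      Set.insert_subset hpcH' (Set.insert_subset hqcH' hmono)
    have hcard := Set.ncard_le_ncard hsub
    rw [Set.ncard_insert_of_notMem (by simp [hpq, hpc.ne, hpcH]),
      Set.ncard_insert_of_notMem hqcH] at hcard
    rw [hverts, Set.ncard_insert_of_notMem hc]
    omega

theorem exists_le_sup_triangle [Finite V] {n : ℕ} (H : G.Subgraph)
    (hn : H.verts.ncard < n) (hH : 2 * H.verts.ncard ≤ H.edgeSet.ncard + 3)
    {t : Finset V} (ht : IsTriangle G t) {p q : V} (hp : p ∈ t) (hq : q ∈ t) (hpq : p ≠ q)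
    (hpH : p ∈ H.verts) (hqH : q ∈ H.verts) :
    ∃ H' : G.Subgraph, H ≤ H' ∧ ((H'.verts.ncard = n ∧ 2 * n ≤ H'.edgeSet.ncard + 3) ∨
      (H'.verts.ncard < n ∧ ↑t ⊆ H'.verts ∧ 2 * H'.verts.ncard ≤ H'.edgeSet.ncard + 3)) := by
  obtain ⟨hV, hE⟩ := H.ncard_sup_induce_triangle ht hp hq hpq hpH hqH
  refine ⟨H ⊔ (⊤ : G.Subgraph).induce t, le_sup_left, ?_⟩
  by_cases hlt : (H ⊔ (⊤ : G.Subgraph).induce t).verts.ncard < n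
  · exact Or.inr ⟨hlt, Set.subset_union_right, by omega⟩
  · exact Or.inl ⟨by omega, by omega⟩

end Triangles

end SimpleGraph.Subgraph

namespace SimpleGraph

variable {V : Type*} {G : SimpleGraph V}

theorem exists_copy_K4_minus_edge {u v r t : V} (huv : u ≠ v) (hur : G.Adj u r)
    (hut : G.Adj u t) (hvr : G.Adj v r) (hvt : G.Adj v t) (hrt : G.Adj r t) :
    ∃ J : G.Subgraph, ∃ f : Fin 4 → V, Function.Injective f ∧ J.verts = Set.range f ∧
      J.edgeSet ∪ {s(u, v)} = Sym2.map f '' (⊤ : SimpleGraph (Fin 4)).edgeSet := by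
  refine ⟨(⊤ : G.Subgraph).induce (Set.range ![u, v, r, t]), ![u, v, r, t], ?_, rfl,
    Subgraph.edgeSet_induce_range_union_eq G _ _ huv ⟨0, rfl⟩ ⟨1, rfl⟩ ?_⟩
  · intro i j h
    fin_cases i <;> fin_cases j <;> simp_all [eq_comm]
  · ext i j
    fin_cases i <;> fin_cases j <;>
      simp [edge_adj, huv, huv.symm, hur, hut, hvr, hvt, hrt, hur.symm, hut.symm, hvr.symm,
        hvt.symm, hrt.symm]

theorem exists_copy_W5_minus_rim_edge {u v w x y : V} (huv : u ≠ v) (hnuv : ¬G.Adj u v)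
    (hnuy : ¬G.Adj u y) (hnvx : ¬G.Adj v x) (hux : G.Adj u x) (hxy : G.Adj x y)
    (hvy : G.Adj v y) (huw : G.Adj u w) (hvw : G.Adj v w) (hxw : G.Adj x w) (hyw : G.Adj y w) :
    ∃ J : G.Subgraph, ∃ f : Fin 5 → V, Function.Injective f ∧ J.verts = Set.range f ∧
      J.edgeSet ∪ {s(u, v)} = Sym2.map f '' W5.edgeSet := by
  have hnvu : ¬G.Adj v u := fun h => hnuv h.symm
  have hnyu : ¬G.Adj y u := fun h => hnuy h.symm
  have hnxv : ¬G.Adj x v := fun h => hnvx h.symm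
  refine ⟨(⊤ : G.Subgraph).induce (Set.range ![u, v, y, x, w]), ![u, v, y, x, w], ?_, rfl,
    Subgraph.edgeSet_induce_range_union_eq G _ _ huv ⟨0, rfl⟩ ⟨1, rfl⟩ ?_⟩
  · intro i j h
    fin_cases i <;> fin_cases j <;> simp_all [eq_comm]
  · ext i j
    fin_cases i <;> fin_cases j <;>
      simp [W5, edge_adj, huv, huv.symm, hnuy, hnvx, hnyu, hnxv, hux, hxy, hvy, huw, hvw, hxw,
        hyw, hux.symm, hxy.symm, hvy.symm, huw.symm, hvw.symm, hxw.symm, hyw.symm, hvy.ne',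
        hux.ne']

end SimpleGraph

section Triangles

variable {V : Type*} [DecidableEq V] {G : SimpleGraph V}

theorem exists_subgraph_of_reflTransGen_triAdj [Finite V] {n : ℕ} (hn : 3 ≤ n)
    {t t' : Finset V} (ht : IsTriangle G t) (h : Relation.ReflTransGen (TriAdj G) t t') :
    ∃ H : G.Subgraph, (H.verts.ncard = n ∧ 2 * n ≤ H.edgeSet.ncard + 3) ∨
      (H.verts.ncard < n ∧ ↑t ⊆ H.verts ∧ ↑t' ⊆ H.verts ∧
        2 * H.verts.ncard ≤ H.edgeSet.ncard + 3) := by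
  induction h with
  | refl =>
    obtain ⟨p, hp, q, hq, hpq⟩ := Finset.one_lt_card.mp (by rw [ht.1]; norm_num)
    have hpq' := ht.2 p hp q hq hpq
    obtain ⟨H, -, hH | ⟨hH, htH, hE⟩⟩ := (G.subgraphOfAdj hpq').exists_le_sup_triangle
      (n := n) (by simp [Set.ncard_pair hpq]; omega) (by simp [Set.ncard_pair hpq])
      ht hp hq hpq (by simp) (by simp)
    · exact ⟨H, Or.inl hH⟩
    · exact ⟨H, Or.inr ⟨hH, htH, htH, hE⟩⟩
  | @tail t₂ t₃ _ hstep ih =>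
    obtain ⟨H, hH | ⟨hH, htH, ht₂H, hE⟩⟩ := ih
    · exact ⟨H, Or.inl hH⟩
    obtain ⟨-, ht₃, hshare⟩ := hstep
    obtain ⟨p, hp, q, hq, hpq⟩ := Finset.one_lt_card.mp hshare
    rw [Finset.mem_inter] at hp hq
    obtain ⟨H', hle, hH' | ⟨hH', ht₃H', hE'⟩⟩ := H.exists_le_sup_triangle hH hE ht₃ hp.2 hq.2
      hpq (ht₂H hp.1) (ht₂H hq.1)
    · exact ⟨H', Or.inl hH'⟩
    · exact ⟨H', Or.inr ⟨hH', htH.trans hle.1, ht₃H', hE'⟩⟩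

end Triangles

/-- Let `G` be a graph whose triangles form a single `K₃`-component:
every edge lies in a triangle and the edge-intersection graph of the triangles is
connected.  If `uw, vw ∈ E(G)` and `uv ∉ E(G)`, then `G` contains a subgraph `J`
such that either `J` has 6 vertices and 9 edges, or `J` plus the extra edge `uv`
is isomorphic to `K₄` or to `W₅`. -/
theorem K3_component_structure {V : Type*} [Fintype V] [DecidableEq V]
    (G : SimpleGraph V)
    (hcover : ∀ e ∈ G.edgeSet, ∃ t : Finset V, IsTriangle G t ∧ ∀ x ∈ e, x ∈ t)
    (hconn : ∀ t t' : Finset V, IsTriangle G t → IsTriangle G t' →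
      Relation.ReflTransGen (TriAdj G) t t')
    (u v w : V) (huv : u ≠ v)
    (huw : G.Adj u w) (hvw : G.Adj v w) (hnuv : ¬ G.Adj u v) :
    ∃ J : G.Subgraph,
      (J.verts.ncard = 6 ∧ J.edgeSet.ncard = 9) ∨
      (∃ f : Fin 4 → V, Function.Injective f ∧ J.verts = Set.range f ∧
        J.edgeSet ∪ {s(u, v)} = Sym2.map f '' (⊤ : SimpleGraph (Fin 4)).edgeSet) ∨
      (∃ f : Fin 5 → V, Function.Injective f ∧ J.verts = Set.range f ∧
        J.edgeSet ∪ {s(u, v)} = Sym2.map f '' W5.edgeSet) := by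
  obtain ⟨t₁, ht₁, hut₁⟩ := hcover s(u, w) huw
  obtain ⟨x, hux, hwx, rfl⟩ := ht₁.exists_eq_insert_third (hut₁ u (by simp)) (hut₁ w (by simp))
    huw.ne
  obtain ⟨t₂, ht₂, hvt₂⟩ := hcover s(v, w) hvw
  obtain ⟨y, hvy, hwy, rfl⟩ := ht₂.exists_eq_insert_third (hvt₂ v (by simp)) (hvt₂ w (by simp))
    hvw.ne
  by_cases hvx : G.Adj v x
  · exact (exists_copy_K4_minus_edge huv huw hux hvw hvx hwx).imp fun _ => Or.inr ∘ Or.inl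
  by_cases huy : G.Adj u y
  · exact (exists_copy_K4_minus_edge huv huw huy hvw hvy hwy).imp fun _ => Or.inr ∘ Or.inl
  by_cases hxy : G.Adj x y
  · exact (exists_copy_W5_minus_rim_edge huv hnuv huy hvx hux hxy hvy huw hvw hwx.symm
      hwy.symm).imp fun _ => Or.inr ∘ Or.inr
  obtain ⟨H, ⟨hV, hE⟩ | ⟨hV, ht₁H, ht₂H, hE⟩⟩ :=
    exists_subgraph_of_reflTransGen_triAdj (n := 6) (by norm_num) ht₁ (hconn _ _ ht₁ ht₂)
  · obtain ⟨J, hJV, hJE⟩ := H.exists_verts_eq_and_ncard_edgeSet_eq (k := 9) (by omega)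
    exact ⟨J, Or.inl ⟨hJV ▸ hV, hJE⟩⟩
  have hS : ({u, v, w, x, y} : Set V) ⊆ H.verts := by
    simp only [Set.insert_subset_iff, Set.singleton_subset_iff]
    exact ⟨ht₁H (by simp), ht₂H (by simp), ht₁H (by simp), ht₁H (by simp), ht₂H (by simp)⟩
  have hS5 : ({u, v, w, x, y} : Set V).ncard = 5 := by
    rw [Set.ncard_insert_of_notMem, Set.ncard_insert_of_notMem, Set.ncard_insert_of_notMem,
      Set.ncard_pair] <;> aesop (add simp G.adj_comm)
  have hVS := Set.eq_of_subset_of_ncard_le hS (by omega)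
  have := H.ncard_edgeSet_le_six_of_verts_subset hVS.ge hnuv huy hvx hxy
  rw [← hVS, hS5] at hE
  omega
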